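/- Let N = N₁ ⊕ N₂ be an orthogonal direct sum of Hilbert C*-modules over A with projections p₁, p₂, and let Y ⊆ N be a subset that is totally bounded with respect to every pseudometric d_{F,Φ} given by a *-N⁰-admissible system F of A-linear functionals on N and a sequence of states Φ. Then p₁Y and p₂Y are totally bounded with respect to every pseudometric coming from *-admissible systems on N₁ for p₁N⁰ and on N₂ for p₂N⁰, respectively. -/

import Mathlib

open scoped ComplexOrder RightActions InnerProductSpace MultiplierAlgebra
open Filter WithCStarModule

noncomputable section

variable {A : Type*} [NonUnitalCStarAlgebra A] [PartialOrder A] [StarOrderedRing A]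

/-- A state on a C⋆-algebra: a positive continuous linear functional of norm one. -/
def IsState (φ : A →L[ℂ] ℂ) : Prop :=
  (∀ a : A, 0 ≤ φ (star a * a)) ∧ ‖φ‖ = 1

variable {E : Type*} [NormedAddCommGroup E] [NormedSpace ℂ E] [SMul Aᵐᵒᵖ E] [CStarModule Aᵐᵒᵖ E]

/-- `f : E → A` is `A`-linear; together with continuity and `ℂ`-linearity this says that `f`
is a bounded `A`-linear functional on the Hilbert C⋆-module `E`. -/
def IsALinear (f : E →L[ℂ] A) : Prop := ∀ (x : E) (a : A), f (x <• a) = f x * a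

/-- A `*`-`N⁰`-admissible system of `A`-linear functionals: each has norm at most one, and for
every `x ∈ N⁰` the series `Σᵢ (fᵢ x)* (fᵢ x)` is norm convergent with partial sums bounded by
`⟪x, x⟫`. -/
def StarAdmissible (N0 : Set E) (f : ℕ → E →L[ℂ] A) : Prop :=
  (∀ i, IsALinear (f i)) ∧ (∀ i, ‖f i‖ ≤ 1) ∧
    ∀ x ∈ N0, (∀ n : ℕ, ∑ i ∈ Finset.range n, star (f i x) * f i x ≤ MulOpposite.unop ⟪x, x⟫_(Aᵐᵒᵖ)) ∧
      Summable fun i => star (f i x) * f i x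

/-- An `N⁰`-admissible system of elements of `E`: each has norm at most one and for every
`x ∈ N⁰` the series `Σᵢ ⟪x, xᵢ⟫⟪xᵢ, x⟫` converges with partial sums bounded by `⟪x, x⟫`. -/
def Admissible (N0 : Set E) (X : ℕ → E) : Prop :=
  (∀ i, ‖X i‖ ≤ 1) ∧
    ∀ x ∈ N0, (∀ n : ℕ, ∑ i ∈ Finset.range n, MulOpposite.unop ⟪x, X i⟫_(Aᵐᵒᵖ) * MulOpposite.unop ⟪X i, x⟫_(Aᵐᵒᵖ) ≤ MulOpposite.unop ⟪x, x⟫_(Aᵐᵒᵖ)) ∧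
      Summable fun i => MulOpposite.unop ⟪x, X i⟫_(Aᵐᵒᵖ) * MulOpposite.unop ⟪X i, x⟫_(Aᵐᵒᵖ)

/-- The pseudometric `d_{F,Φ}` associated with a system of functionals `f` and a sequence of
states `Φ`: `d_{F,Φ}(x,y)² = sup_k Σ_{i ≥ k} |φ_k (f_i (x - y))|²`. -/
def dF (f : ℕ → E →L[ℂ] A) (Φ : ℕ → A →L[ℂ] ℂ) (x y : E) : ℝ :=
  Real.sqrt (⨆ k : ℕ, ∑' i : ℕ, ‖Φ k (f (k + i) (x - y))‖ ^ 2)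

/-- The pseudometric `d_{X,Φ}` associated with a system of elements `X` and a sequence of
states `Φ`: `d_{X,Φ}(x,y)² = sup_k Σ_{i ≥ k} |φ_k ⟪x - y, x_i⟫|²`. -/
def dX (X : ℕ → E) (Φ : ℕ → A →L[ℂ] ℂ) (x y : E) : ℝ :=
  Real.sqrt (⨆ k : ℕ, ∑' i : ℕ, ‖Φ k (MulOpposite.unop ⟪x - y, X (k + i)⟫_(Aᵐᵒᵖ))‖ ^ 2)

/-- `Y` is totally bounded w.r.t. the pseudometric `d`: for each `ε > 0` there is a finite
`ε`-net in `Y` consisting of elements of `Y`. -/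
def TotBddWrt (Y : Set E) (d : E → E → ℝ) : Prop :=
  ∀ ε > (0 : ℝ), ∃ t : Finset E, ↑t ⊆ Y ∧ ∀ y ∈ Y, ∃ z ∈ t, d z y < ε

/-- An operator `g : A → E` is adjointable, with adjoint an `A`-functional `gs` on `E`:
`⟪g a, x⟫ = ⟪a, gs x⟫_A = a* ⬝ gs x`. -/
def AdjFromA (g : A →L[ℂ] E) : Prop :=
  ∃ gs : E →L[ℂ] A, ∀ (a : A) (x : E), MulOpposite.unop ⟪g a, x⟫_(Aᵐᵒᵖ) = star a * gs x

/-- An `A`-functional `h : A → A` is adjointable: there is `hs : A → A` with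
`⟪hs a, b⟫ = ⟪a, h b⟫`, i.e. `(hs a)* b = a* (h b)`. -/
def AdjFunctional (h : A →L[ℂ] A) : Prop :=
  ∃ hs : A →L[ℂ] A, ∀ a b : A, star (hs a) * b = star a * h b

/-- A functional `f : E → A` is locally adjointable if for every adjointable `A`-linear
operator `g : A → E` the composition `f ∘ g : A → A` is an adjointable functional. -/
def LocAdj (f : E →L[ℂ] A) : Prop :=
  ∀ g : A →L[ℂ] E, (∀ a b : A, g (a * b) = g a <• b) → AdjFromA g →
    AdjFunctional (f.comp g)

/-- A functional `f : E → A` is represented by a (modular) multiplier of `E`: for every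
`a ∈ A` the functional `x ↦ a* (f x)` is represented by an element of `E` (this encodes
`f ⬝ a ∈ E ⊆ M(E)`, using `E = M(E)A`). -/
def OuterRepr (f : E →L[ℂ] A) : Prop :=
  ∀ a : A, ∃ z : E, ∀ y : E, star a * f y = MulOpposite.unop ⟪z, y⟫_(Aᵐᵒᵖ)

/-- The Hilbert C⋆-module `E` is countably generated: there is a sequence whose set of
`A`-linear combinations is dense. -/
def CountGen (A : Type*) (E : Type*) [NonUnitalCStarAlgebra A] [PartialOrder A]
    [StarOrderedRing A] [NormedAddCommGroup E] [NormedSpace ℂ E] [SMul Aᵐᵒᵖ E]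
    [CStarModule Aᵐᵒᵖ E] : Prop :=
  ∃ g : ℕ → E,
    closure (↑(Submodule.span ℂ (Set.range g ∪ {y | ∃ i, ∃ a : A, y = g i <• a})) : Set E)
      = Set.univ

/-- `F : M → E` is `A`-compact: it is a norm limit of finite sums of the elementary operators
`x ↦ y ⬝ ⟪z, x⟫`. -/
def ACompact {M : Type*} [NormedAddCommGroup M] [NormedSpace ℂ M] [SMul Aᵐᵒᵖ M]
    [CStarModule Aᵐᵒᵖ M] (F : M →L[ℂ] E) : Prop :=
  ∀ ε > (0 : ℝ), ∃ (n : ℕ) (y : Fin n → E) (z : Fin n → M),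
    ∀ x : M, ‖F x - ∑ i, y i <• MulOpposite.unop ⟪z i, x⟫_(Aᵐᵒᵖ)‖ ≤ ε * ‖x‖

/-!
Composing with an `A`-linear map `p` that satisfies `⟪p x, p x⟫ ≤ ⟪x, x⟫` pulls a
`*`-`p(N⁰)`-admissible system `F` back to the `*`-`N⁰`-admissible system `F ∘ p`, and
`d_{F ∘ p, Φ}(x, y) = d_{F, Φ}(p x, p y)`. Hence the image under `p` of an `ε`-net of `Y` for
`d_{F ∘ p, Φ}` is an `ε`-net of `p Y` for `d_{F, Φ}`. Both coordinate projections of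
`N₁ ⊕ N₂` are such maps, since `⟪x, x⟫ = ⟪p₁ x, p₁ x⟫ + ⟪p₂ x, p₂ x⟫`.
-/

theorem TotBddWrt.image {α β : Type*} {Y : Set α} {d : β → β → ℝ} (p : α → β)
    (hY : TotBddWrt Y fun x y => d (p x) (p y)) : TotBddWrt (p '' Y) d := by
  classical
  intro ε hε
  obtain ⟨t, htY, hnet⟩ := hY ε hε
  refine ⟨t.image p, by simpa using Set.image_mono htY, ?_⟩
  rintro _ ⟨y, hy, rfl⟩
  obtain ⟨z, hzt, hzy⟩ := hnet y hy
  exact ⟨p z, Finset.mem_image_of_mem p hzt, hzy⟩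

theorem dF_comp {B V W : Type*} [NonUnitalCStarAlgebra B] [NormedAddCommGroup V]
    [NormedSpace ℂ V] [NormedAddCommGroup W] [NormedSpace ℂ W]
    (f : ℕ → W →L[ℂ] B) (Φ : ℕ → B →L[ℂ] ℂ) (p : V →L[ℂ] W) :
    dF (fun i => (f i).comp p) Φ = fun x y => dF f Φ (p x) (p y) := by
  ext x y
  simp only [dF, ContinuousLinearMap.comp_apply, map_sub]

section Pullback

variable {M : Type*} [NormedAddCommGroup M] [NormedSpace ℂ M] [SMul Aᵐᵒᵖ M] [CStarModule Aᵐᵒᵖ M]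

theorem norm_le_norm_of_inner_self_le {x : E} {y : M}
    (h : MulOpposite.unop ⟪y, y⟫_(Aᵐᵒᵖ) ≤ MulOpposite.unop ⟪x, x⟫_(Aᵐᵒᵖ)) : ‖y‖ ≤ ‖x‖ := by
  have hy : 0 ≤ MulOpposite.unop ⟪y, y⟫_(Aᵐᵒᵖ) :=
    MulOpposite.unop_nonneg.mpr CStarModule.inner_self_nonneg
  refine le_of_sq_le_sq ?_ (norm_nonneg x)
  calc ‖y‖ ^ 2 = ‖MulOpposite.unop ⟪y, y⟫_(Aᵐᵒᵖ)‖ := by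
        rw [CStarModule.norm_sq_eq Aᵐᵒᵖ, MulOpposite.norm_unop]
    _ ≤ ‖MulOpposite.unop ⟪x, x⟫_(Aᵐᵒᵖ)‖ := CStarAlgebra.norm_le_norm_of_nonneg_of_le hy h
    _ = ‖x‖ ^ 2 := by rw [CStarModule.norm_sq_eq Aᵐᵒᵖ, MulOpposite.norm_unop]

variable {p : E →L[ℂ] M}

theorem StarAdmissible.comp (hp_mod : ∀ (x : E) (a : A), p (x <• a) = p x <• a)
    (hp_inner : ∀ x : E,
      MulOpposite.unop ⟪p x, p x⟫_(Aᵐᵒᵖ) ≤ MulOpposite.unop ⟪x, x⟫_(Aᵐᵒᵖ))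
    {N0 : Set E} {f : ℕ → M →L[ℂ] A} (hf : StarAdmissible (p '' N0) f) :
    StarAdmissible N0 fun i => (f i).comp p := by
  obtain ⟨hlin, hnorm, hsum⟩ := hf
  have hp : ‖p‖ ≤ 1 := p.opNorm_le_bound zero_le_one fun x => by
    rw [one_mul]
    exact norm_le_norm_of_inner_self_le (hp_inner x)
  refine ⟨fun i x a => ?_, fun i => ?_, fun x hx => ?_⟩
  · simp only [ContinuousLinearMap.comp_apply, hp_mod, hlin i (p x) a]
  · calc ‖(f i).comp p‖ ≤ ‖f i‖ * ‖p‖ := (f i).opNorm_comp_le p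
      _ ≤ 1 := mul_le_one₀ (hnorm i) (norm_nonneg p) hp
  · obtain ⟨hbdd, hsummable⟩ := hsum (p x) ⟨x, hx, rfl⟩
    exact ⟨fun n => (hbdd n).trans (hp_inner x), hsummable⟩

theorem totBddWrt_image_of_inner_self_le (hp_mod : ∀ (x : E) (a : A), p (x <• a) = p x <• a)
    (hp_inner : ∀ x : E,
      MulOpposite.unop ⟪p x, p x⟫_(Aᵐᵒᵖ) ≤ MulOpposite.unop ⟪x, x⟫_(Aᵐᵒᵖ))
    {N0 Y : Set E}
    (hY : ∀ (f : ℕ → E →L[ℂ] A) (Φ : ℕ → A →L[ℂ] ℂ),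
      StarAdmissible N0 f → (∀ k, IsState (Φ k)) → TotBddWrt Y (dF f Φ))
    {f : ℕ → M →L[ℂ] A} {Φ : ℕ → A →L[ℂ] ℂ} (hf : StarAdmissible (p '' N0) f)
    (hΦ : ∀ k, IsState (Φ k)) : TotBddWrt (p '' Y) (dF f Φ) := by
  refine TotBddWrt.image p ?_
  rw [← dF_comp]
  exact hY _ Φ (hf.comp hp_mod hp_inner) hΦ

end Pullback

section DirectSum

variable {E₁ E₂ : Type*}
  [NormedAddCommGroup E₁] [NormedSpace ℂ E₁] [SMul Aᵐᵒᵖ E₁] [CStarModule Aᵐᵒᵖ E₁]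
  [NormedAddCommGroup E₂] [NormedSpace ℂ E₂] [SMul Aᵐᵒᵖ E₂] [CStarModule Aᵐᵒᵖ E₂]

/-- The orthogonal projection onto the first summand of `N₁ ⊕ N₂`. -/
def proj1 : C⋆ᵐᵒᵈ(Aᵐᵒᵖ, E₁ × E₂) → E₁ := fun x => (WithCStarModule.equiv Aᵐᵒᵖ (E₁ × E₂) x).1

/-- The orthogonal projection onto the second summand of `N₁ ⊕ N₂`. -/
def proj2 : C⋆ᵐᵒᵈ(Aᵐᵒᵖ, E₁ × E₂) → E₂ := fun x => (WithCStarModule.equiv Aᵐᵒᵖ (E₁ × E₂) x).2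

def proj1L : C⋆ᵐᵒᵈ(Aᵐᵒᵖ, E₁ × E₂) →L[ℂ] E₁ :=
  (ContinuousLinearMap.fst ℂ E₁ E₂).comp (WithCStarModule.equivL ℂ).toContinuousLinearMap

def proj2L : C⋆ᵐᵒᵈ(Aᵐᵒᵖ, E₁ × E₂) →L[ℂ] E₂ :=
  (ContinuousLinearMap.snd ℂ E₁ E₂).comp (WithCStarModule.equivL ℂ).toContinuousLinearMap

theorem inner_self_proj1_le (x : C⋆ᵐᵒᵈ(Aᵐᵒᵖ, E₁ × E₂)) :
    MulOpposite.unop ⟪proj1 x, proj1 x⟫_(Aᵐᵒᵖ) ≤ MulOpposite.unop ⟪x, x⟫_(Aᵐᵒᵖ) := by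
  rw [WithCStarModule.prod_inner, MulOpposite.unop_add]
  exact le_add_of_nonneg_right (MulOpposite.unop_nonneg.mpr CStarModule.inner_self_nonneg)

theorem inner_self_proj2_le (x : C⋆ᵐᵒᵈ(Aᵐᵒᵖ, E₁ × E₂)) :
    MulOpposite.unop ⟪proj2 x, proj2 x⟫_(Aᵐᵒᵖ) ≤ MulOpposite.unop ⟪x, x⟫_(Aᵐᵒᵖ) := by
  rw [WithCStarModule.prod_inner, MulOpposite.unop_add]
  exact le_add_of_nonneg_left (MulOpposite.unop_nonneg.mpr CStarModule.inner_self_nonneg)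

/-- If `Y ⊆ N₁ ⊕ N₂` is totally bounded w.r.t. all pseudometrics coming from
`*`-`N⁰`-admissible systems on `N₁ ⊕ N₂`, then `p₁Y` and `p₂Y` are totally bounded w.r.t. all
pseudometrics coming from `*`-admissible systems for `p₁N⁰` and `p₂N⁰` respectively. -/
theorem statement9 (N0 : Submodule ℂ (C⋆ᵐᵒᵈ(Aᵐᵒᵖ, E₁ × E₂))) (Y : Set (C⋆ᵐᵒᵈ(Aᵐᵒᵖ, E₁ × E₂)))
    (h : ∀ (f : ℕ → C⋆ᵐᵒᵈ(Aᵐᵒᵖ, E₁ × E₂) →L[ℂ] A) (Φ : ℕ → A →L[ℂ] ℂ),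
      StarAdmissible (N0 : Set (C⋆ᵐᵒᵈ(Aᵐᵒᵖ, E₁ × E₂))) f → (∀ k, IsState (Φ k)) →
      TotBddWrt Y (dF f Φ)) :
    (∀ (f₁ : ℕ → E₁ →L[ℂ] A) (Φ : ℕ → A →L[ℂ] ℂ),
      StarAdmissible (proj1 '' (N0 : Set (C⋆ᵐᵒᵈ(Aᵐᵒᵖ, E₁ × E₂)))) f₁ → (∀ k, IsState (Φ k)) →
      TotBddWrt (proj1 '' Y) (dF f₁ Φ)) ∧
    (∀ (f₂ : ℕ → E₂ →L[ℂ] A) (Φ : ℕ → A →L[ℂ] ℂ),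
      StarAdmissible (proj2 '' (N0 : Set (C⋆ᵐᵒᵈ(Aᵐᵒᵖ, E₁ × E₂)))) f₂ → (∀ k, IsState (Φ k)) →
      TotBddWrt (proj2 '' Y) (dF f₂ Φ)) := by
  refine ⟨fun f₁ Φ hf hΦ => ?_, fun f₂ Φ hf hΦ => ?_⟩
  · exact totBddWrt_image_of_inner_self_le (p := proj1L) (fun _ _ => rfl) inner_self_proj1_le
      h hf hΦ
  · exact totBddWrt_image_of_inner_self_le (p := proj2L) (fun _ _ => rfl) inner_self_proj2_le
      h hf hΦ

end DirectSum
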